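/- arXiv:1602.01127 — 6 statements merged into one kernel-verified Lean document; each statement's English description precedes it below -/
import Mathlib

section
/- In an LWX 2-algebroid, the Jacobiator of the skew-symmetrized bracket on degree-0 sections equals −∂Ω: for all e⁰₁, e⁰₂, e⁰₃ ∈ Γ(E₀), ⟦⟦e⁰₁,e⁰₂⟧,e⁰₃⟧ + ⟦⟦e⁰₂,e⁰₃⟧,e⁰₁⟧ + ⟦⟦e⁰₃,e⁰₁⟧,e⁰₂⟧ = −∂Ω(e⁰₁,e⁰₂,e⁰₃). -/
/-- An algebraic model of an LWX 2-algebroid: `R` plays the role of `C^∞(M)`,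
`E0` the sections of the degree-0 part, `E1` the sections of the degree `-1` part.
The anchor `rho` takes values in derivations of `R` (vector fields), `S` is the
nondegenerate degree-1 pairing between `E0` and `E1` (both being isotropic),
`Dm` is the operator `𝒟 : C^∞(M) → Γ(E₋₁)`, `c00, c01, c10` are the components of
the bilinear operation `∘`, and `Om` is the `E₋₁`-valued 3-form `Ω` on `E0`. -/
structure LWX2Algebroid (R E0 E1 : Type*) [CommRing R] [Algebra ℝ R]
    [AddCommGroup E0] [Module ℝ E0] [Module R E0] [IsScalarTower ℝ R E0]
    [AddCommGroup E1] [Module ℝ E1] [Module R E1] [IsScalarTower ℝ R E1] where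
  pd : E1 →ₗ[R] E0
  rho : E0 →ₗ[R] Derivation ℝ R R
  S : E0 →ₗ[R] E1 →ₗ[R] R
  S_nondeg0 : ∀ x : E0, (∀ m : E1, S x m = 0) → x = 0
  S_nondeg1 : ∀ m : E1, (∀ x : E0, S x m = 0) → m = 0
  Dm : R →ₗ[ℝ] E1
  S_Dm : ∀ (f : R) (x : E0), S x (Dm f) = rho x f
  c00 : E0 →ₗ[ℝ] E0 →ₗ[ℝ] E0
  c01 : E0 →ₗ[ℝ] E1 →ₗ[ℝ] E1
  c10 : E1 →ₗ[ℝ] E0 →ₗ[ℝ] E1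
  Om : E0 →ₗ[R] E0 →ₗ[R] E0 →ₗ[R] E1
  Om_alt₁ : ∀ x y z, Om x y z = - Om y x z
  Om_alt₂ : ∀ x y z, Om x y z = - Om x z y
  /- `(Γ(E₋₁), Γ(E₀), ∂, ∘, Ω)` is a Leibniz 2-algebra: conditions (a)-(f). -/
  leib_a : ∀ (x : E0) (m : E1), pd (c01 x m) = c00 x (pd m)
  leib_b : ∀ (m : E1) (x : E0), pd (c10 m x) = c00 (pd m) x
  leib_c : ∀ m n : E1, c01 (pd m) n = c10 m (pd n)
  leib_d : ∀ x y z : E0,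
    pd (Om x y z) = c00 x (c00 y z) - c00 (c00 x y) z - c00 y (c00 x z)
  leib_e1 : ∀ (x y : E0) (m : E1),
    Om x y (pd m) = c01 x (c01 y m) - c01 (c00 x y) m - c01 y (c01 x m)
  leib_e2 : ∀ (x y : E0) (m : E1),
    Om x (pd m) y = c01 x (c10 m y) - c10 (c01 x m) y - c10 m (c00 x y)
  leib_e3 : ∀ (x y : E0) (m : E1),
    Om (pd m) x y = c10 m (c00 x y) - c10 (c10 m x) y - c01 x (c10 m y)
  leib_f : ∀ w x y z : E0,
    c01 w (Om x y z) - c01 x (Om w y z) + c01 y (Om w x z) + c10 (Om w x y) z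
      - Om (c00 w x) y z - Om x (c00 w y) z - Om x y (c00 w z)
      + Om w (c00 x y) z + Om w y (c00 x z) - Om w x (c00 y z) = 0
  /- axiom (ii): `e ∘ e = (1/2) 𝒟 S(e,e)`, in components. -/
  sq0 : ∀ x : E0, c00 x x = 0
  sq_mixed : ∀ (x : E0) (m : E1), c01 x m + c10 m x = Dm (S x m)
  /- axiom (iii). -/
  pd_symm : ∀ m n : E1, S (pd m) n = S (pd n) m
  /- axiom (iv), in components (recall `ρ` is extended by `0` on `E₋₁`). -/
  inv0 : ∀ (x y : E0) (n : E1), rho x (S y n) = S (c00 x y) n + S y (c01 x n)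
  inv1 : ∀ (m : E1) (x y : E0), S y (c10 m x) + S x (c10 m y) = 0
  /- axiom (v). -/
  Om_inv : ∀ x y z w : E0, S w (Om x y z) = - S z (Om x y w)

variable {R E0 E1 : Type*} [CommRing R] [Algebra ℝ R]
  [AddCommGroup E0] [Module ℝ E0] [Module R E0] [IsScalarTower ℝ R E0]
  [AddCommGroup E1] [Module ℝ E1] [Module R E1] [IsScalarTower ℝ R E1]

/-- the Jacobiator of the skew-symmetrized bracket on degree-0
sections equals `−∂Ω`. -/
theorem lwx_jacobiator_degree_zero (L : LWX2Algebroid R E0 E1)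
    (B00 : E0 → E0 → E0) (hB00 : ∀ a b, B00 a b = (1/2 : ℝ) • (L.c00 a b - L.c00 b a)) :
    ∀ x y z : E0,
      B00 (B00 x y) z + B00 (B00 y z) x + B00 (B00 z x) y = - L.pd (L.Om x y z) := by
  -- c00 is antisymmetric by polarization of `sq0`.
  have skew : ∀ a b : E0, L.c00 b a = - L.c00 a b := by
    intro a b
    have h := L.sq0 (a + b)
    simp only [map_add, LinearMap.add_apply, L.sq0] at h
    have h' : L.c00 a b + L.c00 b a = 0 := by
      have := h; abel_nf at this ⊢; linear_combination (norm := abel) this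
    exact eq_neg_of_add_eq_zero_right (add_comm (L.c00 a b) (L.c00 b a) ▸ h')
  -- hence B00 = c00
  have hB : ∀ a b, B00 a b = L.c00 a b := by
    intro a b
    rw [hB00, skew a b, sub_neg_eq_add]
    rw [← two_smul ℝ (L.c00 a b), smul_smul]
    norm_num
  intro x y z
  simp only [hB]
  have hd := L.leib_d x y z
  rw [hd]
  rw [skew (L.c00 y z) x, skew z x, map_neg, skew (L.c00 z x) y]
  abel
end

section
/- In an LWX 2-algebroid, for two degree-0 sections e⁰₁, e⁰₂ and one degree −1 section e¹: J(e⁰₁,e⁰₂,e¹) = 𝒟T(e⁰₁,e⁰₂,e¹) − Ω(e⁰₁,e⁰₂,∂e¹), where J is the Jacobiator of the skew-symmetrized bracket ⟦·,·⟧ and T(e⁰₁,e⁰₂,e¹) = (1/6)(S(e⁰₁,⟦e⁰₂,e¹⟧) + S(e¹,⟦e⁰₁,e⁰₂⟧) + S(e⁰₂,⟦e¹,e⁰₁⟧)). -/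
variable {R E0 E1 : Type*} [CommRing R] [Algebra ℝ R]
  [AddCommGroup E0] [Module ℝ E0] [Module R E0] [IsScalarTower ℝ R E0]
  [AddCommGroup E1] [Module ℝ E1] [Module R E1] [IsScalarTower ℝ R E1]

private lemma lwx_key (L : LWX2Algebroid R E0 E1) (x y : E0) (m : E1) :
    L.c01 x (L.Dm (L.S y m)) = L.Dm (L.rho x (L.S y m)) := by
  rw [← sub_eq_zero]
  apply L.S_nondeg1
  intro z
  rw [map_sub]
  have h1 := L.inv0 x z (L.Dm (L.S y m))
  rw [L.S_Dm, L.S_Dm] at h1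
  have h2 := L.S_Dm (L.rho x (L.S y m)) z
  have A := L.inv0 z y m
  have B := congrArg (fun r => L.rho x r) A
  simp only [map_add] at B
  have C := L.inv0 x (L.c00 z y) m
  have Dd := L.inv0 x y (L.c01 z m)
  have E := L.inv0 x y m
  have F := congrArg (fun r => L.rho z r) E
  simp only [map_add] at F
  have G1 := L.inv0 z (L.c00 x y) m
  have G2 := L.inv0 z y (L.c01 x m)
  have H := L.inv0 (L.c00 x z) y m
  have P := congrArg (fun e => L.S e m) (L.leib_d x z y)
  simp only [map_sub, LinearMap.sub_apply] at P
  have Q := congrArg (fun n => L.S y n) (L.leib_e1 x z m)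
  simp only [map_sub] at Q
  have R1 := L.pd_symm (L.Om x z y) m
  have R2 := L.Om_inv x z y (L.pd m)
  linear_combination -h1 - h2 + B + C + Dd - F - G1 - G2 - H - P - Q + R1 + R2
/-- `J(e⁰₁,e⁰₂,e¹) = 𝒟T(e⁰₁,e⁰₂,e¹) − Ω(e⁰₁,e⁰₂,∂e¹)`, where `J` is
the Jacobiator of `⟦·,·⟧` and `T` is the totally skew-symmetric trilinear function
`T(e⁰₁,e⁰₂,e¹) = (1/6)(S(e⁰₁,⟦e⁰₂,e¹⟧) + S(e¹,⟦e⁰₁,e⁰₂⟧) + S(e⁰₂,⟦e¹,e⁰₁⟧))`. -/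
theorem lwx_jacobiator_mixed (L : LWX2Algebroid R E0 E1)
    (B00 : E0 → E0 → E0) (hB00 : ∀ a b, B00 a b = (1/2 : ℝ) • (L.c00 a b - L.c00 b a))
    (B01 : E0 → E1 → E1) (hB01 : ∀ a m, B01 a m = (1/2 : ℝ) • (L.c01 a m - L.c10 m a))
    (B10 : E1 → E0 → E1) (hB10 : ∀ m a, B10 m a = (1/2 : ℝ) • (L.c10 m a - L.c01 a m))
    (T : E0 → E0 → E1 → R)
    (hT : ∀ x y m, T x y m =
      (1/6 : ℝ) • (L.S x (B01 y m) + L.S (B00 x y) m + L.S y (B10 m x))) :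
    ∀ (x y : E0) (m : E1),
      B01 (B00 x y) m + B10 (B01 y m) x + B10 (B10 m x) y
        = L.Dm (T x y m) - L.Om x y (L.pd m) := by
  intro x y m
  have hsk : L.c00 y x = - L.c00 x y := by
    have h := L.sq0 (x + y)
    simp only [map_add, LinearMap.add_apply, L.sq0] at h
    linear_combination (norm := abel) h
  simp only [hB01, hB10, hB00, hT, hsk]
  simp only [map_add, map_sub, map_smul, map_neg, LinearMap.add_apply,
    LinearMap.sub_apply, LinearMap.smul_apply, LinearMap.neg_apply,
    LinearMap.map_smul_of_tower, smul_sub, smul_add, smul_neg, sub_neg_eq_add]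
  have H1 := L.leib_e1 x y m
  have ho2 := L.leib_e2 y x m
  rw [hsk, map_neg] at ho2
  have hOm2 : L.Om y (L.pd m) x = L.Om x y (L.pd m) := by
    rw [L.Om_alt₂ y (L.pd m) x, L.Om_alt₁ y x (L.pd m), neg_neg]
  have ho3 := L.leib_e3 x y m
  have hOm3 : L.Om (L.pd m) x y = L.Om x y (L.pd m) := by
    rw [L.Om_alt₁ (L.pd m) x y, L.Om_alt₂ x (L.pd m) y, neg_neg]
  have M2 := congrArg (fun n => L.c10 n y) (L.sq_mixed x m)
  simp only [map_add, LinearMap.add_apply] at M2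
  have M2p := congrArg (fun n => L.c10 n x) (L.sq_mixed y m)
  simp only [map_add, LinearMap.add_apply] at M2p
  have M3 := L.sq_mixed y (L.Dm (L.S x m))
  rw [L.S_Dm] at M3
  have M3p := L.sq_mixed x (L.Dm (L.S y m))
  rw [L.S_Dm] at M3p
  have key1 := lwx_key L x y m
  have key2 := lwx_key L y x m
  have H5 := L.sq_mixed (L.c00 x y) m
  have H6 := L.sq_mixed x (L.c01 y m)
  have H7 := L.sq_mixed y (L.c10 m x)
  have H8 := L.sq_mixed y (L.c01 x m)
  have H9 := L.sq_mixed x (L.c10 m y)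
  linear_combination (norm := module) (1/3 : ℝ) • H1 + (1/3 : ℝ) • ho2
    - (1/3 : ℝ) • hOm2 + (1/3 : ℝ) • ho3 - (1/3 : ℝ) • hOm3
    - (1/6 : ℝ) • M2 - (1/6 : ℝ) • M2p - (1/6 : ℝ) • M3 - (1/6 : ℝ) • M3p
    + (1/6 : ℝ) • key1 + (1/6 : ℝ) • key2 + (1/6 : ℝ) • H5
    + (1/12 : ℝ) • H6 + (1/12 : ℝ) • H7 - (1/12 : ℝ) • H8 - (1/12 : ℝ) • H9
end

section
/- In an LWX 2-algebroid, the trilinear function T(e⁰₁,e⁰₂,e¹) = (1/6)(S(e⁰₁,⟦e⁰₂,e¹⟧) + S(e¹,⟦e⁰₁,e⁰₂⟧) + S(e⁰₂,⟦e¹,e⁰₁⟧)) satisfies T(∂e¹₁, e⁰, e¹₂) = −T(∂e¹₂, e⁰, e¹₁) for all e⁰ ∈ Γ(E₀) and e¹₁, e¹₂ ∈ Γ(E₋₁). -/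
variable {R E0 E1 : Type*} [CommRing R] [Algebra ℝ R]
  [AddCommGroup E0] [Module ℝ E0] [Module R E0] [IsScalarTower ℝ R E0]
  [AddCommGroup E1] [Module ℝ E1] [Module R E1] [IsScalarTower ℝ R E1]

/-- `T(∂e¹₁, e⁰, e¹₂) = −T(∂e¹₂, e⁰, e¹₁)`. -/
theorem lwx_T_antisymmetry (L : LWX2Algebroid R E0 E1)
    (B00 : E0 → E0 → E0) (hB00 : ∀ a b, B00 a b = (1/2 : ℝ) • (L.c00 a b - L.c00 b a))
    (B01 : E0 → E1 → E1) (hB01 : ∀ a m, B01 a m = (1/2 : ℝ) • (L.c01 a m - L.c10 m a))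
    (B10 : E1 → E0 → E1) (hB10 : ∀ m a, B10 m a = (1/2 : ℝ) • (L.c10 m a - L.c01 a m))
    (T : E0 → E0 → E1 → R)
    (hT : ∀ x y m, T x y m =
      (1/6 : ℝ) • (L.S x (B01 y m) + L.S (B00 x y) m + L.S y (B10 m x))) :
    ∀ (x : E0) (m n : E1), T (L.pd m) x n = - T (L.pd n) x m := by

  intro x m n
  have key : ∀ a b : E1, L.pd (B01 x b) = - B00 (L.pd b) x := by
    intro a b
    rw [hB01, hB00, LinearMap.map_smul_of_tower, map_sub, L.leib_a, L.leib_b,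
      ← smul_neg, neg_sub]
  have h1 : ∀ a b : E1, L.S (L.pd a) (B01 x b) = - L.S (B00 (L.pd b) x) a := by
    intro a b
    rw [L.pd_symm, key a b, map_neg, LinearMap.neg_apply]
  have h3 : ∀ a b : E1, B10 b (L.pd a) = - B10 a (L.pd b) := by
    intro a b
    rw [hB10, hB10, L.leib_c, L.leib_c, ← smul_neg, neg_sub]
  rw [hT, hT, h1 m n, h3 m n, map_neg]
  have h2 : L.S (B00 (L.pd m) x) n = - L.S (L.pd n) (B01 x m) := by
    rw [h1 n m, neg_neg]
  rw [h2]
  rw [← smul_neg]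
  congr 1
  abel
end

section
/- In an LWX 2-algebroid, the following coherence identity holds for all e⁰₁, e⁰₂, e⁰₃, e⁰₄ ∈ Γ(E₀): Ω(⟦e⁰₁,e⁰₂⟧,e⁰₃,e⁰₄) − Ω(⟦e⁰₁,e⁰₃⟧,e⁰₂,e⁰₄) + Ω(⟦e⁰₁,e⁰₄⟧,e⁰₂,e⁰₃) + Ω(⟦e⁰₂,e⁰₃⟧,e⁰₁,e⁰₄) − Ω(⟦e⁰₂,e⁰₄⟧,e⁰₁,e⁰₃) + Ω(⟦e⁰₃,e⁰₄⟧,e⁰₁,e⁰₂) − ⟦Ω(e⁰₁,e⁰₂,e⁰₃),e⁰₄⟧ − ⟦Ω(e⁰₁,e⁰₃,e⁰₄),e⁰₂⟧ + ⟦Ω(e⁰₁,e⁰₂,e⁰₄),e⁰₃⟧ + ⟦Ω(e⁰₂,e⁰₃,e⁰₄),e⁰₁⟧ + 𝒟S(Ω(e⁰₁,e⁰₂,e⁰₃),e⁰₄) = 0. -/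
variable {R E0 E1 : Type*} [CommRing R] [Algebra ℝ R]
  [AddCommGroup E0] [Module ℝ E0] [Module R E0] [IsScalarTower ℝ R E0]
  [AddCommGroup E1] [Module ℝ E1] [Module R E1] [IsScalarTower ℝ R E1]

set_option maxHeartbeats 4000000 in
/-- the coherence identity for `Ω` with respect to the
skew-symmetrized bracket `⟦·,·⟧` on four degree-0 sections. -/
theorem lwx_Omega_coherence (L : LWX2Algebroid R E0 E1)
    (B00 : E0 → E0 → E0) (hB00 : ∀ a b, B00 a b = (1/2 : ℝ) • (L.c00 a b - L.c00 b a))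
    (B10 : E1 → E0 → E1) (hB10 : ∀ m a, B10 m a = (1/2 : ℝ) • (L.c10 m a - L.c01 a m)) :
    ∀ x1 x2 x3 x4 : E0,
      L.Om (B00 x1 x2) x3 x4 - L.Om (B00 x1 x3) x2 x4 + L.Om (B00 x1 x4) x2 x3
        + L.Om (B00 x2 x3) x1 x4 - L.Om (B00 x2 x4) x1 x3 + L.Om (B00 x3 x4) x1 x2
        - B10 (L.Om x1 x2 x3) x4 - B10 (L.Om x1 x3 x4) x2
        + B10 (L.Om x1 x2 x4) x3 + B10 (L.Om x2 x3 x4) x1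
        + L.Dm (L.S x4 (L.Om x1 x2 x3)) = 0 := by
  have h1 : ∀ i a b c : E0, L.c01 i (L.Om a b c) = - L.c01 i (L.Om b a c) := by
    intro i a b c; rw [L.Om_alt₁ a b c, map_neg]
  have h2 : ∀ i a b c : E0, L.c01 i (L.Om a b c) = - L.c01 i (L.Om a c b) := by
    intro i a b c; rw [L.Om_alt₂ a b c, map_neg]
  have h3 : ∀ i a b c : E0, L.c10 (L.Om a b c) i = - L.c10 (L.Om b a c) i := by
    intro i a b c; rw [L.Om_alt₁ a b c, map_neg, LinearMap.neg_apply]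
  have h4 : ∀ i a b c : E0, L.c10 (L.Om a b c) i = - L.c10 (L.Om a c b) i := by
    intro i a b c; rw [L.Om_alt₂ a b c, map_neg, LinearMap.neg_apply]
  intro x1 x2 x3 x4
  simp only [hB00, hB10, map_sub, LinearMap.map_smul_of_tower, LinearMap.sub_apply,
    LinearMap.smul_apply]
  linear_combination (norm := module)
      (L.leib_f x1 x2 x4 x3) +
      (-1 : ℝ) • (L.leib_f x1 x3 x2 x4) +
      (-1 : ℝ) • (L.leib_f x1 x3 x4 x2) +
      (L.leib_f x1 x4 x2 x3) +
      ((-1 : ℝ)/2) • (L.leib_f x1 x4 x3 x2) +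
      ((1 : ℝ)/2) • (L.leib_f x2 x1 x3 x4) +
      ((-1 : ℝ)/2) • (L.leib_f x2 x1 x4 x3) +
      (L.leib_f x2 x3 x1 x4) +
      ((1 : ℝ)/2) • (L.leib_f x2 x3 x4 x1) +
      (-1 : ℝ) • (L.leib_f x2 x4 x1 x3) +
      ((-1 : ℝ)/2) • (L.leib_f x3 x1 x2 x4) +
      ((1 : ℝ)/2) • (L.leib_f x3 x2 x1 x4) +
      ((1 : ℝ)/2) • (L.leib_f x3 x4 x1 x2) +
      ((1 : ℝ)/2) • (L.leib_f x4 x1 x2 x3) +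
      ((-1 : ℝ)/2) • (L.leib_f x4 x2 x1 x3) +
      ((1 : ℝ)/2) • (L.leib_f x4 x3 x1 x2) +
      (-1 : ℝ) • (L.sq_mixed x4 (L.Om x1 x2 x3)) +
      ((-1 : ℝ)/2) • (h1 x1 x2 x3 x4) +
      ((-1 : ℝ)/2) • (h2 x1 x2 x3 x4) +
      ((1 : ℝ)/2) • (h2 x1 x3 x2 x4) +
      ((1 : ℝ)/2) • (h1 x2 x1 x3 x4) +
      ((1 : ℝ)/2) • (h2 x2 x1 x3 x4) +
      ((1 : ℝ)/2) • (h4 x2 x1 x3 x4) +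
      ((-1 : ℝ)/2) • (h2 x2 x3 x1 x4) +
      ((-1 : ℝ)/2) • (h3 x2 x3 x4 x1) +
      ((-1 : ℝ)/2) • (h1 x3 x1 x2 x4) +
      ((-1 : ℝ)/2) • (h2 x3 x1 x2 x4) +
      ((-1 : ℝ)/2) • (h4 x3 x1 x2 x4) +
      ((-1 : ℝ)/2) • (h3 x3 x1 x4 x2) +
      ((1 : ℝ)/2) • (h2 x3 x2 x1 x4) +
      ((1 : ℝ)/2) • (h4 x3 x2 x1 x4) +
      ((1 : ℝ)/2) • (h3 x3 x2 x4 x1) +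
      ((1 : ℝ)/2) • (h1 x4 x1 x2 x3) +
      ((1 : ℝ)/2) • (h2 x4 x1 x2 x3) +
      ((1 : ℝ)/2) • (h4 x4 x1 x2 x3) +
      ((1 : ℝ)/2) • (h3 x4 x1 x3 x2) +
      ((-1 : ℝ)/2) • (h2 x4 x2 x1 x3) +
      ((-1 : ℝ)/2) • (h4 x4 x2 x1 x3) +
      ((-1 : ℝ)/2) • (h3 x4 x2 x3 x1) +
      ((-1 : ℝ)/2) • (L.Om_alt₂ x3 x4 (L.c00 x1 x2)) +
      ((1 : ℝ)/2) • (L.Om_alt₂ (L.c00 x1 x2) x3 x4) +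
      ((1 : ℝ)/2) • (L.Om_alt₁ x4 (L.c00 x1 x2) x3) +
      (-1 : ℝ) • (L.Om_alt₁ x2 (L.c00 x1 x3) x4) +
      ((1 : ℝ)/2) • (L.Om_alt₂ x2 x4 (L.c00 x1 x3)) +
      ((-1 : ℝ)/2) • (L.Om_alt₂ (L.c00 x1 x3) x2 x4) +
      ((-1 : ℝ)/2) • (L.Om_alt₁ x4 (L.c00 x1 x3) x2) +
      (L.Om_alt₁ x2 (L.c00 x1 x4) x3) +
      ((1 : ℝ)/2) • (L.Om_alt₂ x2 x3 (L.c00 x1 x4)) +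
      ((1 : ℝ)/2) • (L.Om_alt₂ (L.c00 x1 x4) x2 x3) +
      (-1 : ℝ) • (L.Om_alt₁ x3 (L.c00 x1 x4) x2) +
      ((1 : ℝ)/2) • (L.Om_alt₂ x3 x4 (L.c00 x2 x1)) +
      ((-1 : ℝ)/2) • (L.Om_alt₁ x4 (L.c00 x2 x1) x3) +
      (L.Om_alt₁ x1 (L.c00 x2 x3) x4) +
      ((-1 : ℝ)/2) • (L.Om_alt₂ x1 x4 (L.c00 x2 x3)) +
      ((1 : ℝ)/2) • (L.Om_alt₂ (L.c00 x2 x3) x1 x4) +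
      (-1 : ℝ) • (L.Om_alt₁ x1 (L.c00 x2 x4) x3) +
      ((-1 : ℝ)/2) • (L.Om_alt₂ x1 x3 (L.c00 x2 x4)) +
      ((-1 : ℝ)/2) • (L.Om_alt₂ (L.c00 x2 x4) x1 x3) +
      ((1 : ℝ)/2) • (L.Om_alt₁ x3 (L.c00 x2 x4) x1) +
      ((-1 : ℝ)/2) • (L.Om_alt₂ x2 x4 (L.c00 x3 x1)) +
      ((1 : ℝ)/2) • (L.Om_alt₂ x1 x4 (L.c00 x3 x2)) +
      ((1 : ℝ)/2) • (L.Om_alt₁ x1 (L.c00 x3 x4) x2) +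
      ((1 : ℝ)/2) • (L.Om_alt₂ x1 x2 (L.c00 x3 x4)) +
      ((1 : ℝ)/2) • (L.Om_alt₂ (L.c00 x3 x4) x1 x2) +
      ((-1 : ℝ)/2) • (L.Om_alt₁ x2 (L.c00 x3 x4) x1) +
      ((1 : ℝ)/2) • (L.Om_alt₂ x2 x3 (L.c00 x4 x1)) +
      ((-1 : ℝ)/2) • (L.Om_alt₂ x1 x3 (L.c00 x4 x2)) +
      ((1 : ℝ)/2) • (L.Om_alt₂ x1 x2 (L.c00 x4 x3))
end

section
/- An LWX 2-algebroid over a point (i.e., a graded vector space E₋₁ ⊕ E₀ with ρ = 0, 𝒟 = 0) is precisely a Lie 2-algebra (2-term L∞-algebra) (E₋₁, E₀, ∂, ∘, Ω) equipped with a nondegenerate degree-1 invariant symmetric bilinear form S: the operation ∘ is skew-symmetric, and invariance holds in the form S(e₁∘e₂,e₃) + S(e₂,e₁∘e₃) = 0 and S(Ω(e⁰₁,e⁰₂,e⁰₃),e⁰₄) = −S(e⁰₃,Ω(e⁰₁,e⁰₂,e⁰₄)). -/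
variable {R E0 E1 : Type*} [CommRing R] [Algebra ℝ R]
  [AddCommGroup E0] [Module ℝ E0] [Module R E0] [IsScalarTower ℝ R E0]
  [AddCommGroup E1] [Module ℝ E1] [Module R E1] [IsScalarTower ℝ R E1]

/-- an LWX 2-algebroid over a point (`R = ℝ`, so `ρ = 0` and `𝒟 = 0`)
is precisely a Lie 2-algebra with a nondegenerate degree-1 invariant symmetric
bilinear form: the operation `∘` is skew-symmetric (so the Leibniz 2-algebra
`(E₋₁,E₀,∂,∘,Ω)` is a Lie 2-algebra), and `S` is invariant:
`S(e₁∘e₂,e₃) + S(e₂,e₁∘e₃) = 0` and `S(Ω(e⁰₁,e⁰₂,e⁰₃),e⁰₄) = −S(e⁰₃,Ω(e⁰₁,e⁰₂,e⁰₄))`. -/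
theorem lwx_over_point_is_metric_Lie2 {V0 V1 : Type*}
    [AddCommGroup V0] [Module ℝ V0] [AddCommGroup V1] [Module ℝ V1]
    (L : LWX2Algebroid ℝ V0 V1) :
    (∀ x : V0, L.rho x = 0) ∧
    (∀ f : ℝ, L.Dm f = 0) ∧
    (∀ (x : V0) (m : V1), L.c01 x m = - L.c10 m x) ∧
    (∀ (x y : V0) (n : V1), L.S (L.c00 x y) n + L.S y (L.c01 x n) = 0) ∧
    (∀ (m : V1) (x y : V0), L.S y (L.c10 m x) + L.S x (L.c10 m y) = 0) ∧
    (∀ x y z w : V0, L.S w (L.Om x y z) = - L.S z (L.Om x y w)) := by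
  have hrho : ∀ x : V0, L.rho x = 0 := by
    intro x
    ext f
    have : L.rho x f = L.rho x (f • (1:ℝ)) := by simp
    rw [this, Derivation.map_smul, Derivation.map_one_eq_zero]
    simp
  have hDm : ∀ f : ℝ, L.Dm f = 0 := by
    intro f
    apply L.S_nondeg1
    intro x
    rw [L.S_Dm, hrho x]
    rfl
  refine ⟨hrho, hDm, ?_, ?_, L.inv1, L.Om_inv⟩
  · intro x m
    have h := L.sq_mixed x m
    rw [hDm] at h
    exact eq_neg_of_add_eq_zero_left h
  · intro x y n
    have h := L.inv0 x y n
    rw [hrho x] at h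
    exact h.symm.trans rfl
end

section
/- Let (𝔤₋₁, 𝔤₀, l₁, l₂, l₃) be a Lie 2-algebra. Then 𝔡₀ = 𝔤₀ ⊕ 𝔤₋₁* and 𝔡₋₁ = 𝔤₋₁ ⊕ 𝔤₀* carry a Lie 2-algebra structure (the semidirect product with the coadjoint representation) given by ∂ = l₁ + l₁*, [x⁰+α¹, y⁰+β¹] = l₂(x⁰,y⁰) + ad⁰*_{x⁰}β¹ − ad⁰*_{y⁰}α¹, [x⁰+α¹, y¹+β⁰] = l₂(x⁰,y¹) + ad⁰*_{x⁰}β⁰ − ad¹*_{y¹}α¹, and Ω(x⁰+α¹, y⁰+β¹, z⁰+ζ¹) = l₃(x⁰,y⁰,z⁰) + ad³*_{x⁰,y⁰}ζ¹ + ad³*_{y⁰,z⁰}α¹ + ad³*_{z⁰,x⁰}β¹; moreover the canonical degree-1 pairing between 𝔡₀ and 𝔡₋₁ is invariant, making this a metric (quadratic) Lie 2-algebra. -/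
/-- A (semistrict) Lie 2-algebra, i.e. a 2-term `L∞`-algebra
`g1 →^{d} g0` with binary bracket components `l2 : g0 × g0 → g0`,
`l2' : g0 × g1 → g1` (with `l₂(x¹,y⁰) = −l2' y⁰ x¹` by skew-symmetry) and
ternary bracket `l3 : Λ³g0 → g1`. -/
structure Lie2Algebra (g0 g1 : Type*) [AddCommGroup g0] [Module ℝ g0]
    [AddCommGroup g1] [Module ℝ g1] where
  d : g1 →ₗ[ℝ] g0
  l2 : g0 →ₗ[ℝ] g0 →ₗ[ℝ] g0
  l2' : g0 →ₗ[ℝ] g1 →ₗ[ℝ] g1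
  l3 : g0 →ₗ[ℝ] g0 →ₗ[ℝ] g0 →ₗ[ℝ] g1
  l2_skew : ∀ x, l2 x x = 0
  l3_alt1 : ∀ x y z, l3 x y z = - l3 y x z
  l3_alt2 : ∀ x y z, l3 x y z = - l3 x z y
  d_l2 : ∀ (x : g0) (m : g1), d (l2' x m) = l2 x (d m)
  l2_d : ∀ m n : g1, l2' (d m) n = - l2' (d n) m
  jacobi : ∀ x y z : g0,
    l2 x (l2 y z) - l2 (l2 x y) z - l2 y (l2 x z) = d (l3 x y z)
  jacobi' : ∀ (x y : g0) (m : g1),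
    l2' x (l2' y m) - l2' (l2 x y) m - l2' y (l2' x m) = l3 x y (d m)
  coherence : ∀ w x y z : g0,
    l2' w (l3 x y z) - l2' x (l3 w y z) + l2' y (l3 w x z) - l2' z (l3 w x y)
      - l3 (l2 w x) y z - l3 x (l2 w y) z - l3 x y (l2 w z)
      + l3 w (l2 x y) z + l3 w y (l2 x z) - l3 w x (l2 y z) = 0

namespace Lie2Test

variable {g0 g1 : Type*} [AddCommGroup g0] [Module ℝ g0]
    [AddCommGroup g1] [Module ℝ g1] (G : Lie2Algebra g0 g1)

local notation "D0" => g0 × Module.Dual ℝ g1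
local notation "D1" => g1 × Module.Dual ℝ g0

noncomputable def dhat : D1 →ₗ[ℝ] D0 :=
  (G.d).prodMap (LinearMap.lcomp ℝ ℝ G.d)

@[simp] lemma dhat_apply (m : g1) (a : Module.Dual ℝ g0) :
    dhat G (m, a) = (G.d m, a ∘ₗ G.d) := rfl

@[simp] lemma dhat_fst (a : g1 × Module.Dual ℝ g0) : (dhat G a).1 = G.d a.1 := rfl
@[simp] lemma dhat_snd (a : g1 × Module.Dual ℝ g0) (u : g1) : (dhat G a).2 u = a.2 (G.d u) := rfl

noncomputable def L2hat : D0 →ₗ[ℝ] D0 →ₗ[ℝ] D0 :=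
  LinearMap.mk₂ ℝ (fun p q => (G.l2 p.1 q.1, - q.2 ∘ₗ G.l2' p.1 + p.2 ∘ₗ G.l2' q.1))
    (by intro p p' q; ext <;>
      simp [Prod.fst_add, Prod.snd_add, map_add, LinearMap.add_comp, LinearMap.comp_add] <;> abel)
    (by intro c p q; ext <;>
      simp [Prod.smul_fst, Prod.smul_snd, map_smul, LinearMap.smul_comp, LinearMap.comp_smul,
        smul_add, smul_neg])
    (by intro p q q'; ext <;>
      simp [Prod.fst_add, Prod.snd_add, map_add, LinearMap.add_comp, LinearMap.comp_add] <;> abel)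
    (by intro c p q; ext <;>
      simp [Prod.smul_fst, Prod.smul_snd, map_smul, LinearMap.smul_comp, LinearMap.comp_smul,
        smul_add, smul_neg])

@[simp] lemma L2hat_fst (p q : D0) : (L2hat G p q).1 = G.l2 p.1 q.1 := rfl
@[simp] lemma L2hat_snd (p q : D0) (m : g1) :
    (L2hat G p q).2 m = - q.2 (G.l2' p.1 m) + p.2 (G.l2' q.1 m) := rfl

noncomputable def L2Dhat : D0 →ₗ[ℝ] D1 →ₗ[ℝ] D1 :=
  LinearMap.mk₂ ℝ (fun p a => (G.l2' p.1 a.1, - a.2 ∘ₗ G.l2 p.1 - p.2 ∘ₗ (G.l2'.flip a.1)))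
    (by intro p p' q; ext <;>
      simp [Prod.fst_add, Prod.snd_add, map_add, LinearMap.add_comp, LinearMap.comp_add] <;> abel)
    (by intro c p q; ext <;>
      simp [Prod.smul_fst, Prod.smul_snd, map_smul, LinearMap.smul_comp, LinearMap.comp_smul,
        smul_sub, smul_neg])
    (by intro p q q'; ext <;>
      simp [Prod.fst_add, Prod.snd_add, map_add, LinearMap.add_comp, LinearMap.comp_add] <;> abel)
    (by intro c p q; ext <;>
      simp [Prod.smul_fst, Prod.smul_snd, map_smul, LinearMap.smul_comp, LinearMap.comp_smul,
        smul_sub, smul_neg])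

@[simp] lemma L2Dhat_fst (p : D0) (a : D1) : (L2Dhat G p a).1 = G.l2' p.1 a.1 := rfl
@[simp] lemma L2Dhat_snd (p : D0) (a : D1) (y : g0) :
    (L2Dhat G p a).2 y = - a.2 (G.l2 p.1 y) - p.2 (G.l2' y a.1) := rfl

noncomputable def L3inner (p q : D0) : D0 →ₗ[ℝ] D1 :=
  LinearMap.prod
    ((G.l3 p.1 q.1) ∘ₗ (LinearMap.fst ℝ g0 (Module.Dual ℝ g1)))
    ( - ((LinearMap.lcomp ℝ ℝ (G.l3 p.1 q.1)) ∘ₗ LinearMap.snd ℝ g0 (Module.Dual ℝ g1))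
      - ((LinearMap.llcomp ℝ g0 g1 ℝ p.2) ∘ₗ (G.l3 q.1) ∘ₗ LinearMap.fst ℝ g0 (Module.Dual ℝ g1))
      - ((LinearMap.llcomp ℝ g0 g1 ℝ q.2) ∘ₗ (G.l3.flip p.1) ∘ₗ LinearMap.fst ℝ g0 (Module.Dual ℝ g1)))

@[simp] lemma L3inner_fst (p q r : D0) : (L3inner G p q r).1 = G.l3 p.1 q.1 r.1 := rfl
@[simp] lemma L3inner_snd (p q r : D0) (w : g0) :
    (L3inner G p q r).2 w =
      - r.2 (G.l3 p.1 q.1 w) - p.2 (G.l3 q.1 r.1 w) - q.2 (G.l3 r.1 p.1 w) := rfl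

noncomputable def L3hat : D0 →ₗ[ℝ] D0 →ₗ[ℝ] D0 →ₗ[ℝ] D1 :=
  LinearMap.mk₂ ℝ (L3inner G)
    (by intro p p' q; apply LinearMap.ext; intro r; ext <;>
      simp [Prod.fst_add, Prod.snd_add, map_add] <;> abel)
    (by intro c p q; apply LinearMap.ext; intro r; ext <;>
      simp [Prod.smul_fst, Prod.smul_snd, map_smul, smul_sub, smul_neg]; ring)
    (by intro p q q'; apply LinearMap.ext; intro r; ext <;>
      simp [Prod.fst_add, Prod.snd_add, map_add] <;> abel)
    (by intro c p q; apply LinearMap.ext; intro r; ext <;>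
      simp [Prod.smul_fst, Prod.smul_snd, map_smul, smul_sub, smul_neg]; ring)

@[simp] lemma L3hat_fst (p q r : D0) : (L3hat G p q r).1 = G.l3 p.1 q.1 r.1 := rfl
@[simp] lemma L3hat_snd (p q r : D0) (w : g0) :
    (L3hat G p q r).2 w =
      - r.2 (G.l3 p.1 q.1 w) - p.2 (G.l3 q.1 r.1 w) - q.2 (G.l3 r.1 p.1 w) := rfl


lemma l2_anti (x y : g0) : G.l2 x y = - G.l2 y x := by
  have h := G.l2_skew (x + y)
  simp [map_add, LinearMap.add_apply, G.l2_skew] at h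
  exact eq_neg_of_add_eq_zero_right h

lemma l3_swap13 (a b c : g0) : G.l3 a b c = - G.l3 c b a := by
  rw [G.l3_alt1 a b c, G.l3_alt2 b a c, G.l3_alt1 b c a]
  simp

lemma l3_cyc (x y z : g0) : G.l3 x y z = G.l3 y z x := by
  rw [G.l3_alt1 x y z, G.l3_alt2 y x z, neg_neg]

theorem L2hat_skew (p : D0) : L2hat G p p = 0 := by
  ext
  · simp [G.l2_skew]
  · simp

theorem L3hat_alt1 (p q r : D0) : L3hat G p q r = - L3hat G q p r := by
  ext w
  · simp [G.l3_alt1 p.1 q.1]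
  · simp only [L3hat_snd, Prod.snd_neg, LinearMap.neg_apply]
    rw [G.l3_alt1 p.1 q.1, G.l3_alt1 q.1 r.1, G.l3_alt1 r.1 p.1]
    simp; ring

theorem L3hat_alt2 (p q r : D0) : L3hat G p q r = - L3hat G p r q := by
  ext w
  · simp [G.l3_alt2 p.1 q.1]
  · simp only [L3hat_snd, Prod.snd_neg, LinearMap.neg_apply]
    rw [G.l3_alt1 p.1 q.1, G.l3_alt1 q.1 r.1, G.l3_alt1 r.1 p.1]
    simp; ring

theorem dhat_L2 (p : D0) (a : D1) :
    dhat G (L2Dhat G p a) = L2hat G p (dhat G a) := by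
  ext u
  · simp [G.d_l2]
  · simp [G.d_l2, G.l2_d a.1]; ring

theorem L2hat_d (a b : D1) : L2Dhat G (dhat G a) b = - L2Dhat G (dhat G b) a := by
  ext u
  · simpa using G.l2_d a.1 b.1
  · simp only [L2Dhat_snd, Prod.snd_neg, LinearMap.neg_apply, dhat_fst, dhat_snd, G.d_l2]
    have h1 := congrArg b.2 (l2_anti G (G.d a.1) u)
    have h2 := congrArg a.2 (l2_anti G (G.d b.1) u)
    simp only [map_neg] at h1 h2
    linarith

theorem Ljacobi (p q r : D0) :
    L2hat G p (L2hat G q r) - L2hat G (L2hat G p q) r - L2hat G q (L2hat G p r)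
      = dhat G (L3hat G p q r) := by
  ext m
  · simp [G.jacobi]
  · simp only [Prod.snd_sub, LinearMap.sub_apply, L2hat_snd, L2hat_fst, dhat_snd, L3hat_snd]
    have h1 := congrArg r.2 (G.jacobi' p.1 q.1 m)
    have h2 := congrArg q.2 (G.jacobi' p.1 r.1 m)
    have h3 := congrArg p.2 (G.jacobi' q.1 r.1 m)
    have e2 : G.l3 p.1 r.1 (G.d m) = - G.l3 r.1 p.1 (G.d m) := by rw [G.l3_alt1]
    simp only [map_sub, e2, map_neg] at h1 h2 h3
    linarith

theorem Ljacobi' (p q : D0) (a : D1) :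
    L2Dhat G p (L2Dhat G q a) - L2Dhat G (L2hat G p q) a - L2Dhat G q (L2Dhat G p a)
      = L3hat G p q (dhat G a) := by
  ext u
  · simp [G.jacobi']
  · simp only [Prod.snd_sub, LinearMap.sub_apply, L2Dhat_snd, L2Dhat_fst, L2hat_snd,
      L2hat_fst, L3hat_snd, dhat_fst, dhat_snd]
    have h1 := congrArg a.2 (G.jacobi p.1 q.1 u)
    have h2 := congrArg q.2 (G.jacobi' p.1 u a.1)
    have h3 := congrArg p.2 (G.jacobi' q.1 u a.1)
    have e1 : G.l3 (G.d a.1) p.1 u = G.l3 p.1 u (G.d a.1) := by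
      rw [l3_cyc G (G.d a.1) p.1 u]
    have e2 : G.l3 q.1 (G.d a.1) u = - G.l3 q.1 u (G.d a.1) := by rw [G.l3_alt2]
    simp only [map_sub, map_neg, e1, e2] at h1 h2 h3 ⊢
    linarith

theorem Lcoherence (p q r s : D0) :
    L2Dhat G p (L3hat G q r s) - L2Dhat G q (L3hat G p r s)
      + L2Dhat G r (L3hat G p q s) - L2Dhat G s (L3hat G p q r)
      - L3hat G (L2hat G p q) r s - L3hat G q (L2hat G p r) s
      - L3hat G q r (L2hat G p s)
      + L3hat G p (L2hat G q r) s + L3hat G p r (L2hat G q s)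
      - L3hat G p q (L2hat G r s) = 0 := by
  ext u
  · simpa using G.coherence p.1 q.1 r.1 s.1
  · simp only [Prod.snd_add, Prod.snd_sub, Prod.snd_zero, LinearMap.add_apply,
      LinearMap.sub_apply, LinearMap.zero_apply, L2Dhat_snd, L2Dhat_fst, L2hat_snd,
      L2hat_fst, L3hat_snd, L3hat_fst]
    have sw : ∀ (F : Module.Dual ℝ g1) (a b c : g0),
        F (G.l3 a b c) = - F (G.l3 b a c) := by
      intro F a b c; rw [G.l3_alt1 a b c]; simp
    have sw' : ∀ (F : Module.Dual ℝ g1) (t a b c : g0),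
        F (G.l2' t (G.l3 a b c)) = - F (G.l2' t (G.l3 b a c)) := by
      intro F t a b c; rw [G.l3_alt1 a b c]; simp
    have hA := congrArg p.2 (G.coherence q.1 r.1 s.1 u)
    have hB := congrArg q.2 (G.coherence p.1 r.1 s.1 u)
    have hC := congrArg r.2 (G.coherence p.1 q.1 s.1 u)
    have hD := congrArg s.2 (G.coherence p.1 q.1 r.1 u)
    simp only [map_add, map_sub, map_neg, map_zero] at hA hB hC hD
    have a1 := sw' p.2 r.1 s.1 q.1 u
    have b1 := sw q.2 s.1 p.1 (G.l2 r.1 u)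
    have b2 := sw q.2 r.1 p.1 (G.l2 s.1 u)
    have b3 := sw' q.2 r.1 s.1 p.1 u
    have b4 := sw q.2 (G.l2 r.1 s.1) p.1 u
    have c1 := sw r.2 s.1 q.1 (G.l2 p.1 u)
    have c2 := sw r.2 s.1 p.1 (G.l2 q.1 u)
    have c3 := sw r.2 s.1 (G.l2 p.1 q.1) u
    have c4 := sw' r.2 p.1 s.1 q.1 u
    have c5 := sw r.2 (G.l2 p.1 s.1) q.1 u
    have c6 := sw' r.2 q.1 s.1 p.1 u
    have c7 := sw r.2 (G.l2 q.1 s.1) p.1 u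
    linarith [hA, hB, hC, hD, a1, b1, b2, b3, b4, c1, c2, c3, c4, c5, c6, c7]

noncomputable def LTotal : Lie2Algebra (g0 × Module.Dual ℝ g1) (g1 × Module.Dual ℝ g0) where
  d := dhat G
  l2 := L2hat G
  l2' := L2Dhat G
  l3 := L3hat G
  l2_skew := L2hat_skew G
  l3_alt1 := L3hat_alt1 G
  l3_alt2 := L3hat_alt2 G
  d_l2 := dhat_L2 G
  l2_d := L2hat_d G
  jacobi := Ljacobi G
  jacobi' := Ljacobi' G
  coherence := Lcoherence G

end Lie2Test

/-- the semidirect product of a Lie 2-algebra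
`(𝔤₋₁, 𝔤₀, l₁, l₂, l₃)` with its shifted dual via the coadjoint representation:
`𝔡₀ = 𝔤₀ ⊕ 𝔤₋₁*`, `𝔡₋₁ = 𝔤₋₁ ⊕ 𝔤₀*` carry a Lie 2-algebra structure with
`∂ = l₁ + l₁*`, brackets given by the coadjoint operators `ad⁰*`, `ad¹*`, `ad³*`,
and the canonical degree-1 pairing `S` is invariant and nondegenerate, making it a
metric (quadratic) Lie 2-algebra. -/
theorem lie2_semidirect_coadjoint_metric {g0 g1 : Type*}
    [AddCommGroup g0] [Module ℝ g0] [FiniteDimensional ℝ g0]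
    [AddCommGroup g1] [Module ℝ g1] [FiniteDimensional ℝ g1]
    (G : Lie2Algebra g0 g1)
    (Sp : (g0 × Module.Dual ℝ g1) → (g1 × Module.Dual ℝ g0) → ℝ)
    (hSp : ∀ (x : g0) (a1 : Module.Dual ℝ g1) (m : g1) (a0 : Module.Dual ℝ g0),
      Sp (x, a1) (m, a0) = a0 x + a1 m) :
    ∃ L : Lie2Algebra (g0 × Module.Dual ℝ g1) (g1 × Module.Dual ℝ g0),
      -- ∂ = l₁ + l₁*
      (∀ (m : g1) (a0 : Module.Dual ℝ g0), L.d (m, a0) = (G.d m, a0 ∘ₗ G.d)) ∧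
      -- [x⁰+α¹, y⁰+β¹] = l₂(x⁰,y⁰) + ad⁰*_{x⁰}β¹ − ad⁰*_{y⁰}α¹
      (∀ (x : g0) (a1 : Module.Dual ℝ g1) (y : g0) (b1 : Module.Dual ℝ g1),
        (L.l2 (x, a1) (y, b1)).1 = G.l2 x y ∧
        ∀ m : g1, (L.l2 (x, a1) (y, b1)).2 m =
          - b1 (G.l2' x m) + a1 (G.l2' y m)) ∧
      -- [x⁰+α¹, y¹+β⁰] = l₂(x⁰,y¹) + ad⁰*_{x⁰}β⁰ − ad¹*_{y¹}α¹
      (∀ (x : g0) (a1 : Module.Dual ℝ g1) (m : g1) (a0 : Module.Dual ℝ g0),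
        (L.l2' (x, a1) (m, a0)).1 = G.l2' x m ∧
        ∀ y : g0, (L.l2' (x, a1) (m, a0)).2 y =
          - a0 (G.l2 x y) - a1 (G.l2' y m)) ∧
      -- Ω = l₃ + ad³*_{x⁰,y⁰}ζ¹ + ad³*_{y⁰,z⁰}α¹ + ad³*_{z⁰,x⁰}β¹
      (∀ (x : g0) (a1 : Module.Dual ℝ g1) (y : g0) (b1 : Module.Dual ℝ g1)
          (z : g0) (c1 : Module.Dual ℝ g1),
        (L.l3 (x, a1) (y, b1) (z, c1)).1 = G.l3 x y z ∧
        ∀ w : g0, (L.l3 (x, a1) (y, b1) (z, c1)).2 w =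
          - c1 (G.l3 x y w) - a1 (G.l3 y z w) - b1 (G.l3 z x w)) ∧
      -- the pairing is invariant: S(∂a,b) = S(a,∂b)
      (∀ a b : g1 × Module.Dual ℝ g0, Sp (L.d a) b = Sp (L.d b) a) ∧
      -- S([e₁,e₂],e₃) + S(e₂,[e₁,e₃]) = 0 (in components)
      (∀ (e1 e2 : g0 × Module.Dual ℝ g1) (a : g1 × Module.Dual ℝ g0),
        Sp (L.l2 e1 e2) a + Sp e2 (L.l2' e1 a) = 0) ∧
      (∀ (a : g1 × Module.Dual ℝ g0) (e1 e2 : g0 × Module.Dual ℝ g1),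
        Sp e2 (L.l2' e1 a) + Sp e1 (L.l2' e2 a) = 0) ∧
      -- S(Ω(e₁,e₂,e₃),e₄) = −S(e₃,Ω(e₁,e₂,e₄))
      (∀ e1 e2 e3 e4 : g0 × Module.Dual ℝ g1,
        Sp e4 (L.l3 e1 e2 e3) = - Sp e3 (L.l3 e1 e2 e4)) ∧
      -- nondegeneracy of the pairing
      (∀ e : g0 × Module.Dual ℝ g1, (∀ a, Sp e a = 0) → e = 0) ∧
      (∀ a : g1 × Module.Dual ℝ g0, (∀ e, Sp e a = 0) → a = 0) := by
  refine ⟨Lie2Test.LTotal G, ?_, ?_, ?_, ?_, ?_, ?_, ?_, ?_, ?_, ?_⟩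
  · intro m a0; rfl
  · intro x a1 y b1; exact ⟨rfl, fun m => rfl⟩
  · intro x a1 m a0; exact ⟨rfl, fun y => rfl⟩
  · intro x a1 y b1 z c1; exact ⟨rfl, fun w => rfl⟩
  · -- invariance of pairing under d
    intro a b
    have key : ∀ (p : g0 × Module.Dual ℝ g1) (q : g1 × Module.Dual ℝ g0),
        Sp p q = q.2 p.1 + p.2 q.1 := fun p q => hSp p.1 p.2 q.1 q.2
    simp only [key]
    show b.2 ((Lie2Test.dhat G a).1) + (Lie2Test.dhat G a).2 b.1
        = a.2 ((Lie2Test.dhat G b).1) + (Lie2Test.dhat G b).2 a.1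
    simp only [Lie2Test.dhat_fst, Lie2Test.dhat_snd]
    ring
  · intro e1 e2 a
    have key : ∀ (p : g0 × Module.Dual ℝ g1) (q : g1 × Module.Dual ℝ g0),
        Sp p q = q.2 p.1 + p.2 q.1 := fun p q => hSp p.1 p.2 q.1 q.2
    simp only [key]
    show a.2 ((Lie2Test.L2hat G e1 e2).1) + (Lie2Test.L2hat G e1 e2).2 a.1
        + ((Lie2Test.L2Dhat G e1 a).2 e2.1 + e2.2 ((Lie2Test.L2Dhat G e1 a).1)) = 0
    simp only [Lie2Test.L2hat_fst, Lie2Test.L2hat_snd, Lie2Test.L2Dhat_fst,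
      Lie2Test.L2Dhat_snd]
    ring
  · intro a e1 e2
    have key : ∀ (p : g0 × Module.Dual ℝ g1) (q : g1 × Module.Dual ℝ g0),
        Sp p q = q.2 p.1 + p.2 q.1 := fun p q => hSp p.1 p.2 q.1 q.2
    simp only [key]
    show (Lie2Test.L2Dhat G e1 a).2 e2.1 + e2.2 ((Lie2Test.L2Dhat G e1 a).1)
        + ((Lie2Test.L2Dhat G e2 a).2 e1.1 + e1.2 ((Lie2Test.L2Dhat G e2 a).1)) = 0
    simp only [Lie2Test.L2Dhat_fst, Lie2Test.L2Dhat_snd]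
    have h := congrArg a.2 (Lie2Test.l2_anti G e1.1 e2.1)
    simp only [map_neg] at h
    linarith
  · intro e1 e2 e3 e4
    have key : ∀ (p : g0 × Module.Dual ℝ g1) (q : g1 × Module.Dual ℝ g0),
        Sp p q = q.2 p.1 + p.2 q.1 := fun p q => hSp p.1 p.2 q.1 q.2
    simp only [key]
    show (Lie2Test.L3hat G e1 e2 e3).2 e4.1 + e4.2 ((Lie2Test.L3hat G e1 e2 e3).1)
        = -((Lie2Test.L3hat G e1 e2 e4).2 e3.1 + e3.2 ((Lie2Test.L3hat G e1 e2 e4).1))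
    simp only [Lie2Test.L3hat_fst, Lie2Test.L3hat_snd]
    have h1 := congrArg e1.2 (G.l3_alt2 e2.1 e4.1 e3.1)
    have h2 := congrArg e2.2 (Lie2Test.l3_swap13 G e4.1 e1.1 e3.1)
    simp only [map_neg] at h1 h2
    linarith
  · intro e he
    have key : ∀ (p : g0 × Module.Dual ℝ g1) (q : g1 × Module.Dual ℝ g0),
        Sp p q = q.2 p.1 + p.2 q.1 := fun p q => hSp p.1 p.2 q.1 q.2
    have h1 : ∀ m : g1, e.2 m = 0 := by
      intro m; have := he (m, 0); simpa [key] using this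
    have h2 : ∀ α : Module.Dual ℝ g0, α e.1 = 0 := by
      intro α; have := he (0, α); simpa [key] using this
    have hx : e.1 = 0 := (Module.forall_dual_apply_eq_zero_iff ℝ e.1).mp h2
    have hA : e.2 = 0 := by ext m; exact h1 m
    exact Prod.ext hx hA
  · intro a ha
    have key : ∀ (p : g0 × Module.Dual ℝ g1) (q : g1 × Module.Dual ℝ g0),
        Sp p q = q.2 p.1 + p.2 q.1 := fun p q => hSp p.1 p.2 q.1 q.2
    have h1 : ∀ x : g0, a.2 x = 0 := by
      intro x; have := ha (x, 0); simpa [key] using this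
    have h2 : ∀ A : Module.Dual ℝ g1, A a.1 = 0 := by
      intro A; have := ha (0, A); simpa [key] using this
    have hm : a.1 = 0 := (Module.forall_dual_apply_eq_zero_iff ℝ a.1).mp h2
    have hα : a.2 = 0 := by ext x; exact h1 x
    exact Prod.ext hm hα
end
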